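/- arXiv:dg-ga/9603013 — 3 statements merged into one kernel-verified Lean document; each statement's English description precedes it below -/
import Mathlib

section
/- For 0 ≤ t ≤ T with T > 0, the function B(t) = sinh²t/sinh²T − sinh²(2t)/sinh²(2T) is nonnegative, and B(t) > 0 for 0 < t < T. -/
lemma B_eq (T t : ℝ) (hT : Real.sinh T ≠ 0) (hcT : Real.cosh T ≠ 0) :
    Real.sinh t ^ 2 / Real.sinh T ^ 2 - Real.sinh (2 * t) ^ 2 / Real.sinh (2 * T) ^ 2
      = (Real.sinh t ^ 2 / Real.sinh T ^ 2) * (1 - Real.cosh t ^ 2 / Real.cosh T ^ 2) := by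
  rw [Real.sinh_two_mul, Real.sinh_two_mul]
  field_simp

theorem B_nonneg_and_pos (T : ℝ) (hT : 0 < T) :
    (∀ t : ℝ, 0 ≤ t → t ≤ T →
        0 ≤ Real.sinh t ^ 2 / Real.sinh T ^ 2 - Real.sinh (2 * t) ^ 2 / Real.sinh (2 * T) ^ 2) ∧
      (∀ t : ℝ, 0 < t → t < T →
        0 < Real.sinh t ^ 2 / Real.sinh T ^ 2 - Real.sinh (2 * t) ^ 2 / Real.sinh (2 * T) ^ 2) := by
  have hsT : 0 < Real.sinh T := Real.sinh_pos_iff.2 hT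
  have hcT : 0 < Real.cosh T := Real.cosh_pos T
  constructor
  · intro t ht htT
    rw [B_eq T t hsT.ne' hcT.ne']
    apply mul_nonneg
    · positivity
    · have h1 : Real.cosh t ≤ Real.cosh T := by
        rw [Real.cosh_le_cosh, abs_of_nonneg ht, abs_of_pos hT]; exact htT
      have h2 : Real.cosh t ^ 2 ≤ Real.cosh T ^ 2 :=
        pow_le_pow_left₀ (Real.cosh_pos _).le h1 2
      have : Real.cosh t ^ 2 / Real.cosh T ^ 2 ≤ 1 := by
        rw [div_le_one (by positivity : (0:ℝ) < Real.cosh T ^ 2)]; exact h2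
      linarith
  · intro t ht htT
    rw [B_eq T t hsT.ne' hcT.ne']
    apply mul_pos
    · have := Real.sinh_pos_iff.2 ht
      positivity
    · have h1 : Real.cosh t < Real.cosh T := by
        rw [Real.cosh_lt_cosh, abs_of_pos ht, abs_of_pos hT]; exact htT
      have h2 : Real.cosh t ^ 2 < Real.cosh T ^ 2 := by
        apply pow_lt_pow_left₀ h1 (Real.cosh_pos _).le; norm_num
      have : Real.cosh t ^ 2 / Real.cosh T ^ 2 < 1 := by
        rw [div_lt_one (by positivity : (0:ℝ) < Real.cosh T ^ 2)]; exact h2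
      linarith
end

section
/- Let T > 0, B(t) = sinh²t/sinh²T − sinh²(2t)/sinh²(2T), C(T) = ∫₀ᵀ B(t) dt, and A(T) = (sinh 4T + 4T)/(2 sinh² 2T) + (4n·sinh 2T − 8T)/(4 sinh² T). Then A(T) − 4·C(T) = (2n−1)·coth T + tanh T, i.e., it equals Θ'(T)/Θ(T) for Θ(r) = sinh^{2n−1} r · cosh r. -/
open Real intervalIntegral

lemma my_int_sinh_sq (T : ℝ) :
    ∫ t in (0:ℝ)..T, Real.sinh t ^ 2 = (Real.sinh T * Real.cosh T - T) / 2 := by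
  have h : ∀ t ∈ Set.uIcc (0:ℝ) T,
      HasDerivAt (fun t => (Real.sinh t * Real.cosh t - t) / 2) (Real.sinh t ^ 2) t := by
    intro t _
    have := (((Real.hasDerivAt_sinh t).mul (Real.hasDerivAt_cosh t)).sub
      (hasDerivAt_id t)).div_const 2
    refine this.congr_deriv ?_
    have := Real.cosh_sq t
    ring_nf
    nlinarith [Real.cosh_sq t]
  have hc : IntervalIntegrable (fun t => Real.sinh t ^ 2) MeasureTheory.volume 0 T :=
    (Real.continuous_sinh.pow 2).intervalIntegrable 0 T
  rw [intervalIntegral.integral_eq_sub_of_hasDerivAt h hc]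
  simp

lemma my_int_sinh2_sq (T : ℝ) :
    ∫ t in (0:ℝ)..T, Real.sinh (2*t) ^ 2 =
      (Real.sinh (2*T) * Real.cosh (2*T) - 2*T) / 4 := by
  have h : ∀ t ∈ Set.uIcc (0:ℝ) T,
      HasDerivAt (fun t => (Real.sinh (2*t) * Real.cosh (2*t) - 2*t) / 4)
        (Real.sinh (2*t) ^ 2) t := by
    intro t _
    have h2 : HasDerivAt (fun t : ℝ => 2*t) 2 t := by
      simpa using (hasDerivAt_id t).const_mul 2
    have hs := (Real.hasDerivAt_sinh (2*t)).comp t h2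
    have hcc := (Real.hasDerivAt_cosh (2*t)).comp t h2
    have := ((hs.mul hcc).sub h2).div_const 4
    simp only [Function.comp] at this ⊢
    refine this.congr_deriv ?_
    nlinarith [Real.cosh_sq (2*t)]
  have hc : IntervalIntegrable (fun t => Real.sinh (2*t) ^ 2) MeasureTheory.volume 0 T := by
    exact ((Real.continuous_sinh.comp (continuous_const.mul continuous_id)).pow 2).intervalIntegrable 0 T
  rw [intervalIntegral.integral_eq_sub_of_hasDerivAt h hc]
  simp

theorem A_sub_four_C_eq_log_deriv (n : ℕ) (hn : 1 ≤ n) (T : ℝ) (hT : 0 < T) :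
    ((Real.sinh (4 * T) + 4 * T) / (2 * Real.sinh (2 * T) ^ 2) +
        (4 * (n : ℝ) * Real.sinh (2 * T) - 8 * T) / (4 * Real.sinh T ^ 2)) -
      4 * (∫ t in (0 : ℝ)..T,
        Real.sinh t ^ 2 / Real.sinh T ^ 2 - Real.sinh (2 * t) ^ 2 / Real.sinh (2 * T) ^ 2) =
    (2 * (n : ℝ) - 1) * (Real.cosh T / Real.sinh T) + Real.tanh T := by
  have hsT : Real.sinh T ≠ 0 := ne_of_gt (Real.sinh_pos_iff.mpr hT)
  have hs2T : Real.sinh (2*T) ≠ 0 := ne_of_gt (Real.sinh_pos_iff.mpr (by linarith))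
  have hcT : Real.cosh T ≠ 0 := ne_of_gt (Real.cosh_pos T)
  have hi1 : IntervalIntegrable (fun t => Real.sinh t ^ 2 / Real.sinh T ^ 2)
      MeasureTheory.volume 0 T :=
    ((Real.continuous_sinh.pow 2).div_const _).intervalIntegrable 0 T
  have hi2 : IntervalIntegrable (fun t => Real.sinh (2*t) ^ 2 / Real.sinh (2*T) ^ 2)
      MeasureTheory.volume 0 T :=
    (((Real.continuous_sinh.comp (continuous_const.mul continuous_id)).pow 2).div_const
      _).intervalIntegrable 0 T
  rw [intervalIntegral.integral_sub hi1 hi2, intervalIntegral.integral_div,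
    intervalIntegral.integral_div, my_int_sinh_sq, my_int_sinh2_sq]
  have e2 : Real.sinh (2*T) = 2 * Real.sinh T * Real.cosh T := Real.sinh_two_mul T
  have e2c : Real.cosh (2*T) = 2 * Real.cosh T ^ 2 - 1 := (by rw [Real.cosh_two_mul, Real.cosh_sq]; ring)
  have e4 : Real.sinh (4*T) = 2 * Real.sinh (2*T) * Real.cosh (2*T) := by
    rw [show (4:ℝ)*T = 2*(2*T) by ring, Real.sinh_two_mul]
  have ht : Real.tanh T = Real.sinh T / Real.cosh T := Real.tanh_eq_sinh_div_cosh T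
  have hcs : Real.cosh T ^ 2 = 1 + Real.sinh T ^ 2 := (by rw [Real.cosh_sq]; ring)
  rw [e4, ht]
  rw [e2c] at *
  rw [e2] at *
  field_simp
  linear_combination (32 * Real.sinh T * Real.cosh T) * hcs
end

section
/- Let T > 0, A(T) = 3(sinh 4T + 4T)/(2 sinh² 2T) + ((8n+4) sinh 2T − 24T)/(4 sinh² T), B(t) = sinh² t/sinh² T − sinh²(2t)/sinh²(2T), and C(T) = ∫₀ᵀ B(t) dt. Then A(T) − 12·C(T) = (4n−1)·coth T + 3·tanh T, i.e., it equals Θ'(T)/Θ(T) for Θ(r) = sinh^{4n−1} r · cosh³ r. -/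
open Real

lemma sinh_sq_integral (T : ℝ) :
    ∫ t in (0:ℝ)..T, Real.sinh t ^ 2 = Real.sinh (2*T) / 4 - T / 2 := by
  have h : ∀ t ∈ Set.uIcc (0:ℝ) T, HasDerivAt (fun t => Real.sinh (2*t) / 4 - t / 2)
      (Real.sinh t ^ 2) t := by
    intro t _
    have h1 : HasDerivAt (fun t : ℝ => Real.sinh (2*t)) (Real.cosh (2*t) * 2) t := by
      simpa using ((hasDerivAt_id t).const_mul 2).sinh
    have := (h1.div_const 4).sub ((hasDerivAt_id t).div_const 2)
    refine this.congr_deriv ?_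
    nlinarith [Real.cosh_two_mul t, Real.cosh_sq t]
  have hc : ContinuousOn (fun t => Real.sinh t ^ 2) (Set.uIcc 0 T) :=
    (Real.continuous_sinh.pow 2).continuousOn
  have := intervalIntegral.integral_eq_sub_of_hasDerivAt h (hc.intervalIntegrable)
  simpa using this

theorem A_sub_twelve_C_eq_log_deriv (n : ℕ) (hn : 1 ≤ n) (T : ℝ) (hT : 0 < T) :
    (3 * (Real.sinh (4 * T) + 4 * T) / (2 * Real.sinh (2 * T) ^ 2) +
        ((8 * (n : ℝ) + 4) * Real.sinh (2 * T) - 24 * T) / (4 * Real.sinh T ^ 2)) -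
      12 * (∫ t in (0 : ℝ)..T,
        Real.sinh t ^ 2 / Real.sinh T ^ 2 - Real.sinh (2 * t) ^ 2 / Real.sinh (2 * T) ^ 2) =
    (4 * (n : ℝ) - 1) * (Real.cosh T / Real.sinh T) + 3 * Real.tanh T := by
  have hsT : Real.sinh T ≠ 0 := ne_of_gt (Real.sinh_pos_iff.2 hT)
  have hcT : Real.cosh T ≠ 0 := ne_of_gt (Real.cosh_pos T)
  have hs2T : Real.sinh (2*T) ≠ 0 := ne_of_gt (Real.sinh_pos_iff.2 (by linarith))
  have hint : (∫ t in (0 : ℝ)..T,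
      Real.sinh t ^ 2 / Real.sinh T ^ 2 - Real.sinh (2 * t) ^ 2 / Real.sinh (2 * T) ^ 2)
      = (Real.sinh (2*T) / 4 - T / 2) / Real.sinh T ^ 2
        - (Real.sinh (4*T) / 8 - T / 2) / Real.sinh (2*T) ^ 2 := by
    have i1 : IntervalIntegrable (fun t => Real.sinh t ^ 2 / Real.sinh T ^ 2)
        MeasureTheory.volume 0 T :=
      ((Real.continuous_sinh.pow 2).div_const _).intervalIntegrable _ _
    have i2 : IntervalIntegrable (fun t => Real.sinh (2*t) ^ 2 / Real.sinh (2*T) ^ 2)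
        MeasureTheory.volume 0 T :=
      (((Real.continuous_sinh.comp (continuous_const.mul continuous_id)).pow 2).div_const _).intervalIntegrable _ _
    rw [intervalIntegral.integral_sub i1 i2]
    have e1 : (∫ t in (0:ℝ)..T, Real.sinh t ^ 2 / Real.sinh T ^ 2)
        = (Real.sinh (2*T) / 4 - T / 2) / Real.sinh T ^ 2 := by
      rw [intervalIntegral.integral_div, sinh_sq_integral]
    have e2 : (∫ t in (0:ℝ)..T, Real.sinh (2*t) ^ 2 / Real.sinh (2*T) ^ 2)
        = (Real.sinh (4*T) / 8 - T / 2) / Real.sinh (2*T) ^ 2 := by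
      rw [intervalIntegral.integral_div]
      have hsub : (∫ t in (0:ℝ)..T, Real.sinh (2*t) ^ 2)
          = Real.sinh (4*T) / 8 - T / 2 := by
        have h := intervalIntegral.integral_comp_mul_left (a := (0:ℝ)) (b := T)
          (fun t => Real.sinh t ^ 2) (c := 2) two_ne_zero
        rw [h, mul_zero, sinh_sq_integral, show (2:ℝ)*(2*T) = 4*T by ring,
          smul_eq_mul]
        ring
      rw [hsub]
    rw [e1, e2]
  rw [hint]
  have h4 : Real.sinh (4*T) = 2 * Real.sinh (2*T) * Real.cosh (2*T) := by
    rw [show (4:ℝ)*T = 2*(2*T) by ring]; exact Real.sinh_two_mul (2*T)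
  have h2 : Real.sinh (2*T) = 2 * Real.sinh T * Real.cosh T := Real.sinh_two_mul T
  have hc2 : Real.cosh (2*T) = Real.cosh T ^ 2 + Real.sinh T ^ 2 := Real.cosh_two_mul T
  have hcs : Real.cosh T ^ 2 = Real.sinh T ^ 2 + 1 := Real.cosh_sq T
  rw [Real.tanh_eq_sinh_div_cosh, h4, h2, hc2]
  field_simp
  nlinarith [hcs, sq_nonneg (Real.sinh T * Real.cosh T), mul_self_nonneg (Real.sinh T^4 * Real.cosh T^2)]
end
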